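/- Let V[y](x) = ψ_0(x) + ∑_{k=1}^M σ_k ψ_k(x) y_k be the parametrised Karhunen–Loève expansion of the random vector field V, and set B[y](x) := V[y](x) V[y](x)^T ∈ ℝ^{d×d} and C[y](x) := V[y](x)^T V[y](x) ∈ ℝ. Then for every multi-index α ∈ ℕ^M one has ⦀∂_y^α B⦀_{κ,∞,D} ≤ c_{γ_κ}^2 · γ_κ^α and ⦀∂_y^α C⦀_{κ,∞,D} ≤ c_{γ_κ}^2 · γ_κ^α, where γ_κ^α := ∏_{k=1}^M γ_{κ,k}^{α_k}. -/

import Mathlib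

open MeasureTheory Finset
open scoped ENNReal RealInnerProductSpace

noncomputable section

/-- `ℝ^n` with the Euclidean structure. -/
abbrev Euc (n : ℕ) : Type := EuclideanSpace ℝ (Fin n)

/-- Partial derivative in the `i`-th coordinate direction. -/
noncomputable def pder {n : ℕ} {X : Type*} [NormedAddCommGroup X] [NormedSpace ℝ X]
    (i : Fin n) (f : Euc n → X) : Euc n → X :=
  fun x => fderiv ℝ f x (EuclideanSpace.single i 1)

/-- Iterated partial derivative `∂^α` for a multi-index `α`. -/
noncomputable def mder {n : ℕ} {X : Type*} [NormedAddCommGroup X] [NormedSpace ℝ X]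
    (α : Fin n → ℕ) (f : Euc n → X) : Euc n → X :=
  ((List.ofFn fun i : Fin n => (pder i)^[α i]).foldr (· ∘ ·) id) f

/-- The finset of multi-indices `α ∈ ℕ^n` with `|α| ≤ η`. -/
def mIdx (n η : ℕ) : Finset (Fin n → ℕ) :=
  (Fintype.piFinset fun _ : Fin n => Finset.range (η + 1)).filter fun α => (∑ i, α i) ≤ η

/-- Multi-index factorial `α!`. -/
def mfact {n : ℕ} (α : Fin n → ℕ) : ℕ := ∏ i, Nat.factorial (α i)

/-- Order `|α|` of a multi-index. -/
def mdeg {n : ℕ} (α : Fin n → ℕ) : ℕ := ∑ i, α i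

/-- The Sobolev–Bochner norm `‖f‖_{η,p,D;X} = ∑_{|α|≤η} (1/α!) ‖∂^α f‖_{L^p(μ;X)}`. -/
noncomputable def sobNorm {n : ℕ} {X : Type*} [NormedAddCommGroup X] [NormedSpace ℝ X]
    (η : ℕ) (p : ℝ≥0∞) (μ : Measure (Euc n)) (f : Euc n → X) : ℝ :=
  ∑ α ∈ mIdx n η, ((mfact α : ℝ))⁻¹ * (eLpNorm (mder α f) p μ).toReal

/-- Membership in the Sobolev–Bochner space `W^{η,p}(D;X)`. -/
def MemW {n : ℕ} {X : Type*} [NormedAddCommGroup X] [NormedSpace ℝ X]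
    (η : ℕ) (p : ℝ≥0∞) (μ : Measure (Euc n)) (f : Euc n → X) : Prop :=
  ∀ α ∈ mIdx n η, MemLp (mder α f) p μ

/-- Parametric derivative `∂_y^α u` of a parametrised field. -/
noncomputable def pyder {m n : ℕ} {X : Type*} [NormedAddCommGroup X] [NormedSpace ℝ X]
    (α : Fin m → ℕ) (u : Euc m → Euc n → X) : Euc m → Euc n → X :=
  fun y x => mder α (fun y' => u y' x) y

/-- The norm `⦀u⦀_{η,p,D;X} := ess sup_{y} ‖u[y]‖_{η,p,D;X}`. -/
noncomputable def tnorm {m n : ℕ} {X : Type*} [NormedAddCommGroup X] [NormedSpace ℝ X]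
    (η : ℕ) (p : ℝ≥0∞) (μ : Measure (Euc n)) (P : Measure (Euc m))
    (u : Euc m → Euc n → X) : ℝ :=
  (essSup (fun y => ENNReal.ofReal (sobNorm η p μ (u y))) P).toReal

/-- Membership in `L^∞_{ℙ_y}(□; W^{η,p}(D;X))`. -/
def MemLW {m n : ℕ} {X : Type*} [NormedAddCommGroup X] [NormedSpace ℝ X]
    (η : ℕ) (p : ℝ≥0∞) (μ : Measure (Euc n)) (P : Measure (Euc m))
    (u : Euc m → Euc n → X) : Prop :=
  (∀ᵐ y ∂P, MemW η p μ (u y)) ∧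
    essSup (fun y => ENNReal.ofReal (sobNorm η p μ (u y))) P < ⊤

/-- The parameter box `□ = [-1,1]^m`. -/
def box (m : ℕ) : Set (Euc m) := {y | ∀ i, y i ∈ Set.Icc (-1 : ℝ) 1}

/-- The finset of multi-indices `β ≤ ν` (componentwise). -/
def mIic {m : ℕ} (ν : Fin m → ℕ) : Finset (Fin m → ℕ) :=
  Fintype.piFinset fun i => Finset.range (ν i + 1)

/-- Multi-index binomial coefficient. -/
def mchoose {m : ℕ} (α β : Fin m → ℕ) : ℕ := ∏ i, Nat.choose (α i) (β i)

/-!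
For fixed `x`, the field `y ↦ V[y](x)` is affine with slopes `u_k(x) = σ_k ψ_k(x)`, and both
`B` and `C` have the form `Q(V, V)` for a bilinear map `Q` of norm at most one. Hence
`∂_y^α Q(V, V)` vanishes for `|α| ≥ 3`, equals `Q(u_i, V) + Q(V, u_i)` for `α = e_i`, and
`Q(u_j, u_i) + Q(u_i, u_j)` for `α = e_i + e_j`.

The weighted norm `‖·‖_{κ,∞}` is submultiplicative along bilinear maps: by the multi-index
Leibniz rule, `(1/α!) ∂^α Q(f, g) = ∑_{β ≤ α} Q(∂^β f / β!, ∂^{α-β} g / (α-β)!)`. On `□` one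
has `‖V[y]‖_{κ,∞} ≤ γ_0 + ∑_k γ_k ≤ c`, so the three cases are bounded by `c²`,
`2 c γ_i ≤ c² γ_i` and `2 γ_i γ_j ≤ c² γ_i γ_j`, using `c ≥ 2`.
-/

variable {n : ℕ} {X E F G : Type*} [NormedAddCommGroup X] [NormedSpace ℝ X]
  [NormedAddCommGroup E] [NormedSpace ℝ E] [NormedAddCommGroup F] [NormedSpace ℝ F]
  [NormedAddCommGroup G] [NormedSpace ℝ G]

lemma mem_mIic {ν β : Fin n → ℕ} : β ∈ mIic ν ↔ β ≤ ν := by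
  simp [mIic, Fintype.mem_piFinset, Pi.le_def]

lemma mdeg_mono {α β : Fin n → ℕ} (h : β ≤ α) : mdeg β ≤ mdeg α :=
  Finset.sum_le_sum fun k _ => h k

lemma mem_mIdx {η : ℕ} {α : Fin n → ℕ} : α ∈ mIdx n η ↔ mdeg α ≤ η := by
  simp only [mIdx, mem_filter, Fintype.mem_piFinset, mem_range, Nat.lt_succ_iff, mdeg,
    and_iff_right_iff_imp]
  exact fun h k => (single_le_sum (fun _ _ => Nat.zero_le _) (mem_univ k)).trans h

/-! ### Iterated partial derivatives along a list of directions -/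

def pderList (l : List (Fin n)) (f : Euc n → X) : Euc n → X := l.foldr pder f

@[simp] lemma pderList_nil (f : Euc n → X) : pderList [] f = f := rfl

@[simp] lemma pderList_cons (i : Fin n) (l : List (Fin n)) (f : Euc n → X) :
    pderList (i :: l) f = pder i (pderList l f) := rfl

lemma pderList_append (l₁ l₂ : List (Fin n)) (f : Euc n → X) :
    pderList (l₁ ++ l₂) f = pderList l₁ (pderList l₂ f) := List.foldr_append

def multiIdx (l : List (Fin n)) : Fin n → ℕ := fun k => l.count k

def dirList (α : Fin n → ℕ) : List (Fin n) :=
  (List.finRange n).flatMap fun i => List.replicate (α i) i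

lemma multiIdx_cons (i : Fin n) (l : List (Fin n)) :
    multiIdx (i :: l) = multiIdx l + Pi.single i 1 := by
  funext k
  by_cases h : k = i
  · subst h; simp [multiIdx]
  · simp [multiIdx, h, Ne.symm h]

lemma multiIdx_dirList (α : Fin n → ℕ) : multiIdx (dirList α) = α := by
  funext k
  simp only [multiIdx, dirList, List.count_flatMap, Function.comp_def, List.count_replicate,
    beq_iff_eq]
  rw [← Fin.sum_univ_def]
  simp

lemma mdeg_multiIdx (l : List (Fin n)) : mdeg (multiIdx l) = l.length := by
  simpa [mdeg, multiIdx] using Multiset.sum_count_eq_card (s := univ) (m := (l : Multiset (Fin n)))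
    (fun a _ => mem_univ a)

lemma length_dirList (α : Fin n → ℕ) : (dirList α).length = mdeg α := by
  rw [← mdeg_multiIdx, multiIdx_dirList]

lemma prod_pow_multiIdx {M : Type*} [CommMonoid M] (γ : Fin n → M) (l : List (Fin n)) :
    ∏ k, γ k ^ multiIdx l k = (l.map γ).prod := by
  classical
  rw [Finset.prod_list_map_count]
  refine (prod_subset (subset_univ _) fun k _ hk => ?_).symm
  simp [multiIdx, List.count_eq_zero_of_not_mem (by simpa using hk)]

lemma pderList_replicate (k : ℕ) (i : Fin n) (f : Euc n → X) :
    pderList (List.replicate k i) f = (pder i)^[k] f := by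
  induction k with
  | zero => rfl
  | succ k ih => rw [List.replicate_succ, pderList_cons, ih, Function.iterate_succ_apply']

lemma pderList_dirList (α : Fin n → ℕ) (f : Euc n → X) : pderList (dirList α) f = mder α f := by
  have hfold : ∀ (gs : List ((Euc n → X) → Euc n → X)) f,
      gs.foldr (· ∘ ·) id f = gs.foldr (fun g r => g r) f := by
    intro gs f
    induction gs with
    | nil => rfl
    | cons g t ih => simp [ih]
  rw [mder, hfold, List.ofFn_eq_map, List.foldr_map, dirList]
  induction List.finRange n with
  | nil => rfl
  | cons i t ih =>
    rw [List.flatMap_cons, pderList_append, ih, pderList_replicate]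
    rfl

lemma ContDiff.pder {f : Euc n → X} {k : WithTop ℕ∞} (hf : ContDiff ℝ (k + 1) f) (i : Fin n) :
    ContDiff ℝ k (pder i f) :=
  (hf.fderiv_right le_rfl).clm_apply contDiff_const

lemma ContDiff.pderList {κ : ℕ} {f : Euc n → X} (hf : ContDiff ℝ (κ : ℕ∞) f) {l : List (Fin n)}
    {k : ℕ} (h : l.length + k ≤ κ) : ContDiff ℝ (k : ℕ∞) (pderList l f) := by
  induction l generalizing k with
  | nil => exact hf.of_le (by exact_mod_cast (by simpa using h : k ≤ κ))
  | cons i t ih =>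
    exact_mod_cast (ih (k := k + 1) (by simp at h; omega)).pder i

lemma ContDiff.mder {κ : ℕ} {f : Euc n → X} (hf : ContDiff ℝ (κ : ℕ∞) f) {α : Fin n → ℕ}
    {k : ℕ} (h : mdeg α + k ≤ κ) : ContDiff ℝ (k : ℕ∞) (mder α f) := by
  rw [← pderList_dirList]
  exact hf.pderList (by rwa [length_dirList])

lemma pder_comm {f : Euc n → X} (hf : ContDiff ℝ 2 f) (i j : Fin n) :
    pder i (pder j f) = pder j (pder i f) := by
  funext x
  have hdf : Differentiable ℝ (fderiv ℝ f) :=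
    (hf.fderiv_right (m := 1) le_rfl).differentiable one_ne_zero
  have hsecond : ∀ v w : Euc n,
      fderiv ℝ (fun y => fderiv ℝ f y v) x w = fderiv ℝ (fderiv ℝ f) x w v := fun v w => by
    rw [fderiv_clm_apply (hdf x) (differentiableAt_const v)]
    simp
  unfold pder
  rw [hsecond, hsecond]
  exact (hf.contDiffAt.isSymmSndFDerivAt (by simp [minSmoothness_of_isRCLikeNormedField])).eq _ _

lemma pderList_perm {κ : ℕ} {f : Euc n → X} (hf : ContDiff ℝ (κ : ℕ∞) f)
    {l₁ l₂ : List (Fin n)} (hp : l₁.Perm l₂) (hl : l₁.length ≤ κ) :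
    pderList l₁ f = pderList l₂ f := by
  induction hp with
  | nil => rfl
  | cons i _ ih => simp only [pderList_cons, ih (by simp at hl; omega)]
  | swap a b t =>
    exact pder_comm (hf.pderList (l := t) (k := 2) (by simp at hl; omega)) b a
  | trans h₁ _ ih₁ ih₂ => rw [ih₁ hl, ih₂ (h₁.length_eq ▸ hl)]

lemma pderList_eq_mder {κ : ℕ} {f : Euc n → X} (hf : ContDiff ℝ (κ : ℕ∞) f)
    {l : List (Fin n)} (hl : l.length ≤ κ) : pderList l f = mder (multiIdx l) f := by
  rw [← pderList_dirList]
  refine pderList_perm hf (List.perm_iff_count.2 fun k => ?_) hl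
  exact (congrFun (multiIdx_dirList (multiIdx l)) k).symm

lemma pder_mder {κ : ℕ} {f : Euc n → X} (hf : ContDiff ℝ (κ : ℕ∞) f) (i : Fin n)
    {α : Fin n → ℕ} (hα : mdeg α < κ) : pder i (mder α f) = mder (α + Pi.single i 1) f := by
  rw [← pderList_dirList, ← pderList_cons, pderList_eq_mder hf, multiIdx_cons, multiIdx_dirList]
  simpa [length_dirList] using hα

/-! ### The multi-index Leibniz rule -/

lemma Pi.single_one_le_iff {ι : Type*} [DecidableEq ι] {i : ι} {β : ι → ℕ} :
    Pi.single i 1 ≤ β ↔ β i ≠ 0 := by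
  simp [Pi.single, update_le_iff, Nat.one_le_iff_ne_zero]

lemma mchoose_eq_zero {α β : Fin n → ℕ} (h : ¬β ≤ α) : mchoose α β = 0 := by
  obtain ⟨k, hk⟩ : ∃ k, α k < β k := by simpa [Pi.le_def] using h
  exact prod_eq_zero (mem_univ k) (Nat.choose_eq_zero_of_lt hk)

lemma mchoose_add_single (α β : Fin n → ℕ) (i : Fin n) :
    mchoose (α + Pi.single i 1) β =
      mchoose α β + if β i = 0 then 0 else mchoose α (β - Pi.single i 1) := by
  have hsplit : ∀ a b : Fin n → ℕ, (∀ k ≠ i, a k = α k ∧ b k = β k) →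
      mchoose a b = (a i).choose (b i) * ∏ k ∈ {i}ᶜ, (α k).choose (β k) := fun a b hab => by
    rw [mchoose, Fintype.prod_eq_mul_prod_compl i]
    congr 1
    refine prod_congr rfl fun k hk => ?_
    rw [(hab k (by simpa using hk)).1, (hab k (by simpa using hk)).2]
  have hoff : ∀ k ≠ i, (Pi.single i 1 : Fin n → ℕ) k = 0 := fun k hk => Pi.single_eq_of_ne hk 1
  rw [hsplit (α + Pi.single i 1) β fun k hk => by simp [hoff k hk],
    hsplit α β fun _ _ => ⟨rfl, rfl⟩]
  split_ifs with hβ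
  · simp [hβ]
  · rw [hsplit α (β - Pi.single i 1) fun k hk => by simp [hoff k hk]]
    obtain ⟨b, hb⟩ := Nat.exists_eq_succ_of_ne_zero hβ
    simp [hb, Nat.choose_succ_succ', add_mul, add_comm]

lemma sum_mIic_add_single (α : Fin n → ℕ) (i : Fin n) (T : (Fin n → ℕ) → (Fin n → ℕ) → X) :
    ∑ β ∈ mIic (α + Pi.single i 1),
        (mchoose (α + Pi.single i 1) β : ℝ) • T β (α + Pi.single i 1 - β) =
      ∑ β ∈ mIic α, (mchoose α β : ℝ) •
        (T (β + Pi.single i 1) (α - β) + T β (α - β + Pi.single i 1)) := by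
  set e : Fin n → ℕ := Pi.single i 1
  have hshift : (mIic (α + e)).filter (fun β => ¬β i = 0) = (mIic α).map (addRightEmbedding e) := by
    ext β
    simp only [mem_filter, mem_map, mem_mIic, addRightEmbedding_apply, ← Pi.single_one_le_iff]
    constructor
    · rintro ⟨hle, he⟩
      exact ⟨β - e, tsub_le_iff_right.2 hle, tsub_add_cancel_of_le he⟩
    · rintro ⟨γ, hγ, rfl⟩
      exact ⟨add_le_add hγ le_rfl, le_add_self⟩
  have hlower : ∑ β ∈ mIic (α + e), (mchoose α β : ℝ) • T β (α + e - β) =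
      ∑ β ∈ mIic α, (mchoose α β : ℝ) • T β (α - β + e) := by
    refine (sum_subset (fun β hβ => mem_mIic.2 ((mem_mIic.1 hβ).trans le_self_add))
      fun β _ hβ => ?_).symm.trans (sum_congr rfl fun β hβ => ?_)
    · simp [mchoose_eq_zero (mt mem_mIic.2 hβ)]
    · rw [tsub_add_eq_add_tsub (mem_mIic.1 hβ)]
  have hupper : ∑ β ∈ mIic (α + e),
        ((if β i = 0 then 0 else mchoose α (β - e) : ℕ) : ℝ) • T β (α + e - β) =
      ∑ β ∈ mIic α, (mchoose α β : ℝ) • T (β + e) (α - β) := by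
    simp only [Nat.cast_ite, Nat.cast_zero, ite_smul, zero_smul]
    rw [sum_ite, sum_const_zero, zero_add, hshift, sum_map]
    simp [add_tsub_add_eq_tsub_right]
  calc _ = ∑ β ∈ mIic (α + e), ((mchoose α β : ℝ) • T β (α + e - β) +
          ((if β i = 0 then 0 else mchoose α (β - e) : ℕ) : ℝ) • T β (α + e - β)) :=
        sum_congr rfl fun β _ => by rw [mchoose_add_single, Nat.cast_add, add_smul]
    _ = _ := by
      rw [sum_add_distrib, hlower, hupper, ← sum_add_distrib]
      exact sum_congr rfl fun β _ => by rw [smul_add, add_comm]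

lemma pder_const (i : Fin n) (c : X) : pder i (fun _ => c) = 0 := by
  funext x
  simp [pder]

lemma pder_add {f g : Euc n → X} (hf : Differentiable ℝ f) (hg : Differentiable ℝ g) (i : Fin n) :
    pder i (f + g) = pder i f + pder i g := by
  funext x
  simp [pder, fderiv_add (hf x) (hg x)]

lemma pder_sum {ι : Type*} (s : Finset ι) {f : ι → Euc n → X}
    (hf : ∀ j ∈ s, Differentiable ℝ (f j)) (i : Fin n) :
    pder i (fun x => ∑ j ∈ s, f j x) = fun x => ∑ j ∈ s, pder i (f j) x := by
  funext x
  simp [pder, fderiv_fun_sum fun j hj => hf j hj x]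

lemma pder_const_smul (c : ℝ) {f : Euc n → X} (hf : Differentiable ℝ f) (i : Fin n) :
    pder i (fun x => c • f x) = fun x => c • pder i f x := by
  funext x
  simp [pder, fderiv_fun_const_smul (hf x) c]

lemma pder_clm_comp (L : E →L[ℝ] X) {f : Euc n → E} (hf : Differentiable ℝ f) (i : Fin n) :
    pder i (L ∘ f) = L ∘ pder i f := by
  funext x
  simp [pder, fderiv_comp x L.differentiableAt (hf x)]

lemma pder_bilin (B : E →L[ℝ] F →L[ℝ] G) {f : Euc n → E} {g : Euc n → F}
    (hf : Differentiable ℝ f) (hg : Differentiable ℝ g) (i : Fin n) :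
    pder i (fun x => B (f x) (g x)) = fun x => B (pder i f x) (g x) + B (f x) (pder i g x) := by
  funext x
  simp [pder, B.fderiv_of_bilinear (hf x) (hg x), add_comm]

lemma mder_zero (f : Euc n → X) : mder 0 f = f := by
  rw [← pderList_dirList, show dirList (0 : Fin n → ℕ) = [] from
    List.flatMap_eq_nil_iff.2 fun _ _ => rfl, pderList_nil]

lemma pderList_zero_fun (l : List (Fin n)) :
    pderList l (fun _ : Euc n => (0 : X)) = fun _ => 0 := by
  induction l with
  | nil => rfl
  | cons i t ih => rw [pderList_cons, ih]; exact pder_const i 0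

lemma mder_zero_fun (α : Fin n → ℕ) : mder α (fun _ : Euc n => (0 : X)) = fun _ => 0 := by
  rw [← pderList_dirList, pderList_zero_fun]

lemma mder_add {κ : ℕ} {f g : Euc n → X} (hf : ContDiff ℝ (κ : ℕ∞) f)
    (hg : ContDiff ℝ (κ : ℕ∞) g) {α : Fin n → ℕ} (hα : mdeg α ≤ κ) :
    mder α (f + g) = mder α f + mder α g := by
  simp only [← pderList_dirList]
  rw [← length_dirList] at hα
  generalize dirList α = l at hα ⊢
  induction l with
  | nil => rfl
  | cons i t ih =>
    have ht : t.length + 1 ≤ κ := by simpa using hα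
    rw [pderList_cons, ih (by omega), pder_add ((hf.pderList ht).differentiable one_ne_zero)
      ((hg.pderList ht).differentiable one_ne_zero)]
    rfl

lemma mder_clm_comp {κ : ℕ} (L : E →L[ℝ] X) {f : Euc n → E} (hf : ContDiff ℝ (κ : ℕ∞) f)
    {α : Fin n → ℕ} (hα : mdeg α ≤ κ) : mder α (L ∘ f) = L ∘ mder α f := by
  simp only [← pderList_dirList]
  rw [← length_dirList] at hα
  generalize dirList α = l at hα ⊢
  induction l with
  | nil => rfl
  | cons i t ih =>
    have ht : t.length + 1 ≤ κ := by simpa using hα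
    rw [pderList_cons, ih (by omega), pder_clm_comp L ((hf.pderList ht).differentiable one_ne_zero)]
    rfl

lemma mder_const_smul {κ : ℕ} (c : ℝ) {f : Euc n → X} (hf : ContDiff ℝ (κ : ℕ∞) f)
    {α : Fin n → ℕ} (hα : mdeg α ≤ κ) : mder α (c • f) = c • mder α f :=
  mder_clm_comp (c • ContinuousLinearMap.id ℝ X) hf hα

lemma mder_sum {κ : ℕ} {ι : Type*} (s : Finset ι) {f : ι → Euc n → X}
    (hf : ∀ j ∈ s, ContDiff ℝ (κ : ℕ∞) (f j)) {α : Fin n → ℕ} (hα : mdeg α ≤ κ) :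
    mder α (fun x => ∑ j ∈ s, f j x) = fun x => ∑ j ∈ s, mder α (f j) x := by
  classical
  induction s using Finset.induction_on with
  | empty => exact mder_zero_fun α
  | insert a s ha ih =>
    have hfs : ∀ j ∈ s, ContDiff ℝ (κ : ℕ∞) (f j) := fun j hj => hf j (mem_insert_of_mem hj)
    simp only [sum_insert ha]
    exact (mder_add (hf a (mem_insert_self a s)) (ContDiff.sum hfs) hα).trans
      (congrArg _ (ih hfs))

theorem mder_bilin {κ : ℕ} (B : E →L[ℝ] F →L[ℝ] G) {f : Euc n → E} {g : Euc n → F}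
    (hf : ContDiff ℝ (κ : ℕ∞) f) (hg : ContDiff ℝ (κ : ℕ∞) g) {α : Fin n → ℕ}
    (hα : mdeg α ≤ κ) :
    mder α (fun x => B (f x) (g x)) =
      fun x => ∑ β ∈ mIic α, (mchoose α β : ℝ) • B (mder β f x) (mder (α - β) g x) := by
  suffices h : ∀ l : List (Fin n), l.length ≤ κ → pderList l (fun x => B (f x) (g x)) =
      fun x => ∑ β ∈ mIic (multiIdx l), (mchoose (multiIdx l) β : ℝ) •
        B (mder β f x) (mder (multiIdx l - β) g x) by
    rw [← pderList_dirList, h _ (by rwa [length_dirList]), multiIdx_dirList]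
  intro l hl
  induction l with
  | nil =>
    have hIic : mIic (0 : Fin n → ℕ) = {0} := by ext β; simp [mem_mIic]
    funext x
    simp [show multiIdx ([] : List (Fin n)) = 0 from rfl, hIic, mchoose, mder_zero]
  | cons i t ih =>
    have ht : t.length < κ := by simpa using hl
    have hdeg : ∀ β ∈ mIic (multiIdx t), mdeg β < κ ∧ mdeg (multiIdx t - β) < κ := fun β hβ =>
      ⟨(mdeg_mono (mem_mIic.1 hβ)).trans_lt (mdeg_multiIdx t ▸ ht),
        (mdeg_mono tsub_le_self).trans_lt (mdeg_multiIdx t ▸ ht)⟩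
    have hdf : ∀ β ∈ mIic (multiIdx t), Differentiable ℝ (mder β f) := fun β hβ =>
      (hf.mder (k := 1) (hdeg β hβ).1).differentiable one_ne_zero
    have hdg : ∀ β ∈ mIic (multiIdx t), Differentiable ℝ (mder (multiIdx t - β) g) := fun β hβ =>
      (hg.mder (k := 1) (hdeg β hβ).2).differentiable one_ne_zero
    have hdB : ∀ β ∈ mIic (multiIdx t),
        Differentiable ℝ fun x => B (mder β f x) (mder (multiIdx t - β) g x) := fun β hβ =>
      B.isBoundedBilinearMap.differentiable.comp ((hdf β hβ).prodMk (hdg β hβ))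
    rw [pderList_cons, ih ht.le, pder_sum _ (f := fun β x => (mchoose (multiIdx t) β : ℝ) •
      B (mder β f x) (mder (multiIdx t - β) g x)) fun β hβ => (hdB β hβ).const_smul _,
      multiIdx_cons]
    funext x
    rw [sum_mIic_add_single (T := fun β γ => B (mder β f x) (mder γ g x))]
    refine sum_congr rfl fun β hβ => ?_
    rw [pder_const_smul _ (hdB β hβ), pder_bilin B (hdf β hβ) (hdg β hβ),
      pder_mder hf i (hdeg β hβ).1, pder_mder hg i (hdeg β hβ).2]

/-! ### The norms `‖·‖_{κ,p}` -/

section SobolevNorm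

variable {κ : ℕ} {p : ℝ≥0∞} {μ : Measure (Euc n)}

lemma sobNorm_nonneg (f : Euc n → X) : 0 ≤ sobNorm κ p μ f :=
  sum_nonneg fun _ _ => mul_nonneg (inv_nonneg.2 (Nat.cast_nonneg _)) ENNReal.toReal_nonneg

lemma sobNorm_zero : sobNorm κ p μ (fun _ => (0 : X)) = 0 :=
  sum_eq_zero fun α _ => by simp [mder_zero_fun]

lemma MemW.add {f g : Euc n → X} (hf : ContDiff ℝ (κ : ℕ∞) f) (hg : ContDiff ℝ (κ : ℕ∞) g)
    (hfW : MemW κ p μ f) (hgW : MemW κ p μ g) : MemW κ p μ (f + g) := fun α hα => by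
  rw [mder_add hf hg (mem_mIdx.1 hα)]
  exact (hfW α hα).add (hgW α hα)

lemma sobNorm_add_le (hp : 1 ≤ p) {f g : Euc n → X} (hf : ContDiff ℝ (κ : ℕ∞) f)
    (hg : ContDiff ℝ (κ : ℕ∞) g) (hfW : MemW κ p μ f) (hgW : MemW κ p μ g) :
    sobNorm κ p μ (f + g) ≤ sobNorm κ p μ f + sobNorm κ p μ g := by
  rw [sobNorm, sobNorm, sobNorm, ← sum_add_distrib]
  refine sum_le_sum fun α hα => ?_
  rw [mder_add hf hg (mem_mIdx.1 hα), ← mul_add]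
  gcongr
  exact ENNReal.toReal_le_add (eLpNorm_add_le (hfW α hα).1 (hgW α hα).1 hp)
    (hfW α hα).eLpNorm_ne_top (hgW α hα).eLpNorm_ne_top

lemma MemW.const_smul (c : ℝ) {f : Euc n → X} (hf : ContDiff ℝ (κ : ℕ∞) f)
    (hfW : MemW κ p μ f) : MemW κ p μ (c • f) := fun α hα => by
  rw [mder_const_smul c hf (mem_mIdx.1 hα)]
  exact (hfW α hα).const_smul c

lemma sobNorm_const_smul (c : ℝ) {f : Euc n → X} (hf : ContDiff ℝ (κ : ℕ∞) f) :
    sobNorm κ p μ (c • f) = |c| * sobNorm κ p μ f := by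
  rw [sobNorm, sobNorm, mul_sum]
  refine sum_congr rfl fun α hα => ?_
  rw [mder_const_smul c hf (mem_mIdx.1 hα), eLpNorm_const_smul, ENNReal.toReal_mul,
    toReal_enorm, Real.norm_eq_abs]
  ring

lemma MemW.sum {ι : Type*} (s : Finset ι) {f : ι → Euc n → X}
    (hf : ∀ j ∈ s, ContDiff ℝ (κ : ℕ∞) (f j)) (hfW : ∀ j ∈ s, MemW κ p μ (f j)) :
    MemW κ p μ (fun x => ∑ j ∈ s, f j x) := fun α hα => by
  rw [mder_sum s hf (mem_mIdx.1 hα)]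
  exact memLp_finsetSum s fun j hj => hfW j hj α hα

lemma sobNorm_sum_le (hp : 1 ≤ p) {ι : Type*} (s : Finset ι) {f : ι → Euc n → X}
    (hf : ∀ j ∈ s, ContDiff ℝ (κ : ℕ∞) (f j)) (hfW : ∀ j ∈ s, MemW κ p μ (f j)) :
    sobNorm κ p μ (fun x => ∑ j ∈ s, f j x) ≤ ∑ j ∈ s, sobNorm κ p μ (f j) := by
  classical
  induction s using Finset.induction_on with
  | empty => simp [sobNorm_zero]
  | insert a s ha ih =>
    have hfs : ∀ j ∈ s, ContDiff ℝ (κ : ℕ∞) (f j) := fun j hj => hf j (mem_insert_of_mem hj)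
    have hfWs : ∀ j ∈ s, MemW κ p μ (f j) := fun j hj => hfW j (mem_insert_of_mem hj)
    simp only [sum_insert ha]
    calc sobNorm κ p μ (f a + fun x => ∑ j ∈ s, f j x)
        ≤ sobNorm κ p μ (f a) + sobNorm κ p μ (fun x => ∑ j ∈ s, f j x) :=
          sobNorm_add_le hp (hf a (mem_insert_self a s)) (ContDiff.sum hfs)
            (hfW a (mem_insert_self a s)) (MemW.sum s hfs hfWs)
      _ ≤ _ := by gcongr; exact ih hfs hfWs

end SobolevNorm

lemma ae_norm_le_toReal_eLpNorm_top {Ω Y : Type*} [MeasurableSpace Ω] [NormedAddCommGroup Y]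
    {f : Ω → Y} {μ : Measure Ω} (hf : MemLp f ⊤ μ) :
    ∀ᵐ x ∂μ, ‖f x‖ ≤ (eLpNorm f ⊤ μ).toReal := by
  have hfin := hf.eLpNorm_ne_top
  rw [eLpNorm_exponent_top] at hfin ⊢
  filter_upwards [ae_le_eLpNormEssSup (f := f) (μ := μ)] with x hx
  rw [← toReal_enorm]
  exact ENNReal.toReal_mono hfin hx

lemma mfact_pos (α : Fin n → ℕ) : 0 < mfact α :=
  prod_pos fun _ _ => Nat.factorial_pos _

lemma mchoose_mul_mfact_mul_mfact {α β : Fin n → ℕ} (h : β ≤ α) :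
    mchoose α β * (mfact β * mfact (α - β)) = mfact α := by
  simp only [mchoose, mfact, ← prod_mul_distrib]
  exact prod_congr rfl fun k _ => by
    rw [← mul_assoc, Pi.sub_apply, Nat.choose_mul_factorial_mul_factorial (h k)]

lemma mfact_inv_mul_mchoose {α β : Fin n → ℕ} (h : β ≤ α) :
    (mfact α : ℝ)⁻¹ * mchoose α β = (mfact β : ℝ)⁻¹ * (mfact (α - β) : ℝ)⁻¹ := by
  have hα : (mfact α : ℝ) ≠ 0 := by exact_mod_cast (mfact_pos α).ne'
  have hβ : (mfact β : ℝ) ≠ 0 := by exact_mod_cast (mfact_pos β).ne'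
  have hαβ : (mfact (α - β) : ℝ) ≠ 0 := by exact_mod_cast (mfact_pos (α - β)).ne'
  field_simp
  rw [← mchoose_mul_mfact_mul_mfact h]
  push_cast
  ring

/-- Since `(1/α!) C(α, β) = 1/(β! (α-β)!)`, the left side is a subsum of the expanded product. -/
lemma sum_mIdx_mchoose_le {κ : ℕ} {a b : (Fin n → ℕ) → ℝ} (ha : 0 ≤ a) (hb : 0 ≤ b) :
    ∑ α ∈ mIdx n κ, (mfact α : ℝ)⁻¹ * ∑ β ∈ mIic α, (mchoose α β : ℝ) * (a β * b (α - β)) ≤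
      (∑ β ∈ mIdx n κ, (mfact β : ℝ)⁻¹ * a β) * ∑ γ ∈ mIdx n κ, (mfact γ : ℝ)⁻¹ * b γ := by
  set F : (Fin n → ℕ) × (Fin n → ℕ) → ℝ :=
    fun q => (mfact q.1 : ℝ)⁻¹ * a q.1 * ((mfact q.2 : ℝ)⁻¹ * b q.2)
  set split : (_ : Fin n → ℕ) × (Fin n → ℕ) → (Fin n → ℕ) × (Fin n → ℕ) := fun p => (p.2, p.1 - p.2)
  set S := (mIdx n κ).sigma mIic
  have hlhs : ∑ α ∈ mIdx n κ, (mfact α : ℝ)⁻¹ *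
      ∑ β ∈ mIic α, (mchoose α β : ℝ) * (a β * b (α - β)) = ∑ p ∈ S, F (split p) := by
    rw [sum_sigma]
    refine sum_congr rfl fun α _ => ?_
    rw [mul_sum]
    refine sum_congr rfl fun β hβ => ?_
    simp only [F, split]
    rw [← mul_assoc, mfact_inv_mul_mchoose (mem_mIic.1 hβ)]
    ring
  have hinj : Set.InjOn split S := by
    rintro ⟨α, β⟩ hp ⟨α', β'⟩ hq h
    simp only [S, coe_sigma, Set.mem_sigma_iff, mem_coe, mem_mIic, split, Prod.mk.injEq] at hp hq h
    obtain ⟨rfl, h⟩ := h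
    rw [tsub_eq_iff_eq_add_of_le hp.2, tsub_add_cancel_of_le hq.2] at h
    rw [h]
  have hmaps : S.image split ⊆ mIdx n κ ×ˢ mIdx n κ := by
    simp only [subset_iff, mem_image, mem_product, mem_sigma, mem_mIdx, mem_mIic, S, split]
    rintro _ ⟨⟨α, β⟩, ⟨hα, hβ⟩, rfl⟩
    exact ⟨(mdeg_mono hβ).trans hα, (mdeg_mono tsub_le_self).trans hα⟩
  rw [hlhs, ← sum_image hinj, sum_mul_sum, ← sum_product']
  exact sum_le_sum_of_subset_of_nonneg hmaps fun q _ _ =>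
    mul_nonneg (mul_nonneg (inv_nonneg.2 (Nat.cast_nonneg _)) (ha _))
      (mul_nonneg (inv_nonneg.2 (Nat.cast_nonneg _)) (hb _))

section Bilinear

variable {κ : ℕ} {μ : Measure (Euc n)} (B : E →L[ℝ] F →L[ℝ] G) {f : Euc n → E} {g : Euc n → F}

lemma ae_norm_mder_bilin_le (hf : ContDiff ℝ (κ : ℕ∞) f) (hg : ContDiff ℝ (κ : ℕ∞) g)
    (hfW : MemW κ ⊤ μ f) (hgW : MemW κ ⊤ μ g) {α : Fin n → ℕ} (hα : α ∈ mIdx n κ) :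
    ∀ᵐ x ∂μ, ‖mder α (fun x => B (f x) (g x)) x‖ ≤ ‖B‖ * ∑ β ∈ mIic α, (mchoose α β : ℝ) *
      ((eLpNorm (mder β f) ⊤ μ).toReal * (eLpNorm (mder (α - β) g) ⊤ μ).toReal) := by
  have hsub : ∀ β ∈ mIic α, β ∈ mIdx n κ ∧ α - β ∈ mIdx n κ := fun β hβ =>
    ⟨mem_mIdx.2 ((mdeg_mono (mem_mIic.1 hβ)).trans (mem_mIdx.1 hα)),
      mem_mIdx.2 ((mdeg_mono tsub_le_self).trans (mem_mIdx.1 hα))⟩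
  have hbounds : ∀ᵐ x ∂μ, ∀ β ∈ mIic α, ‖mder β f x‖ ≤ (eLpNorm (mder β f) ⊤ μ).toReal ∧
      ‖mder (α - β) g x‖ ≤ (eLpNorm (mder (α - β) g) ⊤ μ).toReal :=
    (Filter.eventually_all_finset _).2 fun β hβ =>
      (ae_norm_le_toReal_eLpNorm_top (hfW β (hsub β hβ).1)).and
        (ae_norm_le_toReal_eLpNorm_top (hgW _ (hsub β hβ).2))
  filter_upwards [hbounds] with x hx
  rw [mder_bilin B hf hg (mem_mIdx.1 hα), mul_sum]
  refine (norm_sum_le _ _).trans (sum_le_sum fun β hβ => ?_)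
  rw [norm_smul, Real.norm_natCast, mul_left_comm]
  gcongr
  refine (B.le_opNorm₂ _ _).trans ?_
  rw [mul_assoc]
  gcongr
  exacts [(hx β hβ).1, (hx β hβ).2]

lemma ContDiff.bilin {k : WithTop ℕ∞} (hf : ContDiff ℝ k f) (hg : ContDiff ℝ k g) :
    ContDiff ℝ k (fun x => B (f x) (g x)) :=
  B.isBoundedBilinearMap.contDiff.comp (hf.prodMk hg)

lemma MemW.bilin (hf : ContDiff ℝ (κ : ℕ∞) f) (hg : ContDiff ℝ (κ : ℕ∞) g)
    (hfW : MemW κ ⊤ μ f) (hgW : MemW κ ⊤ μ g) : MemW κ ⊤ μ (fun x => B (f x) (g x)) :=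
  fun α hα => memLp_top_of_bound
    ((hf.bilin B hg).mder (k := 0) (by simpa using mem_mIdx.1 hα)).continuous.aestronglyMeasurable
    _ (ae_norm_mder_bilin_le B hf hg hfW hgW hα)

theorem sobNorm_bilin_le (hf : ContDiff ℝ (κ : ℕ∞) f) (hg : ContDiff ℝ (κ : ℕ∞) g)
    (hfW : MemW κ ⊤ μ f) (hgW : MemW κ ⊤ μ g) :
    sobNorm κ ⊤ μ (fun x => B (f x) (g x)) ≤ ‖B‖ * (sobNorm κ ⊤ μ f * sobNorm κ ⊤ μ g) := by
  calc sobNorm κ ⊤ μ (fun x => B (f x) (g x))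
      ≤ ∑ α ∈ mIdx n κ, (mfact α : ℝ)⁻¹ * (‖B‖ * ∑ β ∈ mIic α, (mchoose α β : ℝ) *
          ((eLpNorm (mder β f) ⊤ μ).toReal * (eLpNorm (mder (α - β) g) ⊤ μ).toReal)) := by
        refine sum_le_sum fun α hα => ?_
        gcongr
        refine ENNReal.toReal_le_of_le_ofReal (by positivity) ?_
        rw [eLpNorm_exponent_top]
        exact eLpNormEssSup_le_of_ae_bound (ae_norm_mder_bilin_le B hf hg hfW hgW hα)
    _ = ‖B‖ * ∑ α ∈ mIdx n κ, (mfact α : ℝ)⁻¹ * ∑ β ∈ mIic α, (mchoose α β : ℝ) *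
          ((eLpNorm (mder β f) ⊤ μ).toReal * (eLpNorm (mder (α - β) g) ⊤ μ).toReal) := by
        rw [mul_sum]
        exact sum_congr rfl fun α _ => mul_left_comm _ _ _
    _ ≤ ‖B‖ * (sobNorm κ ⊤ μ f * sobNorm κ ⊤ μ g) :=
        mul_le_mul_of_nonneg_left
          (sum_mIdx_mchoose_le (a := fun β => (eLpNorm (mder β f) ⊤ μ).toReal)
            (b := fun γ => (eLpNorm (mder γ g) ⊤ μ).toReal) (fun _ => ENNReal.toReal_nonneg)
            (fun _ => ENNReal.toReal_nonneg)) (norm_nonneg B)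

end Bilinear

lemma sobNorm_bilin_add_swap_le {κ : ℕ} {μ : Measure (Euc n)} (B : E →L[ℝ] E →L[ℝ] G)
    {f g : Euc n → E} (hf : ContDiff ℝ (κ : ℕ∞) f) (hg : ContDiff ℝ (κ : ℕ∞) g)
    (hfW : MemW κ ⊤ μ f) (hgW : MemW κ ⊤ μ g) :
    sobNorm κ ⊤ μ ((fun x => B (f x) (g x)) + fun x => B (g x) (f x)) ≤
      2 * ‖B‖ * (sobNorm κ ⊤ μ f * sobNorm κ ⊤ μ g) := by
  refine (sobNorm_add_le le_top (hf.bilin B hg) (hg.bilin B hf) (hfW.bilin B hf hg hgW)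
    (hgW.bilin B hg hf hfW)).trans ?_
  linarith [sobNorm_bilin_le B hf hg hfW hgW, sobNorm_bilin_le B hg hf hgW hfW,
    mul_comm (sobNorm κ ⊤ μ f) (sobNorm κ ⊤ μ g)]

/-! ### Quadratic forms in an affine parameter -/

section Affine

variable {m : ℕ}

def affineParam (u₀ : E) (u : Fin m → E) (y : Euc m) : E := u₀ + ∑ k, y k • u k

lemma hasFDerivAt_affineParam (u₀ : E) (u : Fin m → E) (y : Euc m) :
    HasFDerivAt (affineParam u₀ u) (∑ k, (EuclideanSpace.proj k : Euc m →L[ℝ] ℝ).smulRight (u k))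
      y := by
  have h : affineParam u₀ u =
      fun y => u₀ + (∑ k, (EuclideanSpace.proj k : Euc m →L[ℝ] ℝ).smulRight (u k)) y := by
    funext y
    simp [affineParam]
  rw [h]
  exact (ContinuousLinearMap.hasFDerivAt _).const_add u₀

lemma differentiable_affineParam (u₀ : E) (u : Fin m → E) : Differentiable ℝ (affineParam u₀ u) :=
  fun y => (hasFDerivAt_affineParam u₀ u y).differentiableAt

lemma pder_affineParam (u₀ : E) (u : Fin m → E) (i : Fin m) :
    pder i (affineParam u₀ u) = fun _ => u i := by
  funext y
  simp [pder, (hasFDerivAt_affineParam u₀ u y).fderiv]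

variable (B : E →L[ℝ] E →L[ℝ] X) (u₀ : E) (u : Fin m → E)

lemma pder_quadratic_affineParam (i : Fin m) :
    pder i (fun y => B (affineParam u₀ u y) (affineParam u₀ u y)) =
      fun y => B (u i) (affineParam u₀ u y) + B (affineParam u₀ u y) (u i) := by
  rw [pder_bilin B (differentiable_affineParam u₀ u) (differentiable_affineParam u₀ u),
    pder_affineParam]

lemma pderList_pair_quadratic_affineParam (i j : Fin m) :
    pderList [i, j] (fun y => B (affineParam u₀ u y) (affineParam u₀ u y)) =
      fun _ => B (u j) (u i) + B (u i) (u j) := by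
  have hA := differentiable_affineParam u₀ u
  have hc : Differentiable ℝ fun _ : Euc m => u j := differentiable_const _
  have hleft : Differentiable ℝ fun y => B (u j) (affineParam u₀ u y) :=
    B.isBoundedBilinearMap.differentiable.comp (hc.prodMk hA)
  have hright : Differentiable ℝ fun y => B (affineParam u₀ u y) (u j) :=
    B.isBoundedBilinearMap.differentiable.comp (hA.prodMk hc)
  rw [pderList_cons, pderList_cons, pderList_nil, pder_quadratic_affineParam]
  rw [show (fun y => B (u j) (affineParam u₀ u y) + B (affineParam u₀ u y) (u j)) =
      (fun y => B (u j) (affineParam u₀ u y)) + fun y => B (affineParam u₀ u y) (u j) from rfl,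
    pder_add hleft hright, pder_bilin B hc hA,
    pder_bilin B hA hc, pder_const, pder_affineParam]
  funext y
  simp

lemma pderList_quadratic_affineParam_of_three_le (t : List (Fin m)) (i j k : Fin m) :
    pderList (t ++ [i, j, k]) (fun y => B (affineParam u₀ u y) (affineParam u₀ u y)) =
      fun _ => 0 := by
  rw [pderList_append, pderList_cons, pderList_pair_quadratic_affineParam, pder_const]
  exact pderList_zero_fun t

end Affine

lemma List.eq_nil_or_singleton_or_pair_or_append_triple {A : Type*} (l : List A) :
    l = [] ∨ (∃ i, l = [i]) ∨ (∃ i j, l = [i, j]) ∨ ∃ t i j k, l = t ++ [i, j, k] := by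
  rcases h : l.reverse with _ | ⟨a, _ | ⟨b, _ | ⟨c, t⟩⟩⟩ <;>
    rw [List.reverse_eq_iff] at h <;> subst h
  · simp
  · simp
  · simp
  · exact Or.inr (Or.inr (Or.inr ⟨t.reverse, c, b, a, by simp⟩))

section ParametricBounds

variable {m d κ : ℕ} {p : ℝ≥0∞} {μ : Measure (Euc d)} {u₀ : Euc d → E} {u : Fin m → Euc d → E}

lemma contDiff_affineParam_apply (hu₀ : ContDiff ℝ (κ : ℕ∞) u₀)
    (hu : ∀ k, ContDiff ℝ (κ : ℕ∞) (u k)) (y : Euc m) :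
    ContDiff ℝ (κ : ℕ∞) (fun x => affineParam (u₀ x) (fun k => u k x) y) :=
  hu₀.add (ContDiff.sum fun k _ => (hu k).const_smul (y k))

lemma memW_affineParam_apply (hu₀ : ContDiff ℝ (κ : ℕ∞) u₀)
    (hu : ∀ k, ContDiff ℝ (κ : ℕ∞) (u k)) (hu₀W : MemW κ p μ u₀) (huW : ∀ k, MemW κ p μ (u k))
    (y : Euc m) : MemW κ p μ (fun x => affineParam (u₀ x) (fun k => u k x) y) :=
  hu₀W.add hu₀ (ContDiff.sum fun k _ => (hu k).const_smul (y k))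
    (MemW.sum _ (fun k _ => (hu k).const_smul (y k)) fun k _ => (huW k).const_smul (y k) (hu k))

lemma sobNorm_affineParam_apply_le (hp : 1 ≤ p) (hu₀ : ContDiff ℝ (κ : ℕ∞) u₀)
    (hu : ∀ k, ContDiff ℝ (κ : ℕ∞) (u k)) (hu₀W : MemW κ p μ u₀) (huW : ∀ k, MemW κ p μ (u k))
    {y : Euc m} (hy : ∀ k, |y k| ≤ 1) :
    sobNorm κ p μ (fun x => affineParam (u₀ x) (fun k => u k x) y) ≤
      sobNorm κ p μ u₀ + ∑ k, sobNorm κ p μ (u k) := by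
  have hyu : ∀ k ∈ univ, ContDiff ℝ (κ : ℕ∞) (y k • u k) := fun k _ => (hu k).const_smul (y k)
  calc sobNorm κ p μ (fun x => affineParam (u₀ x) (fun k => u k x) y)
      ≤ sobNorm κ p μ u₀ + sobNorm κ p μ (fun x => ∑ k, y k • u k x) :=
        sobNorm_add_le hp hu₀ (ContDiff.sum hyu) hu₀W
          (MemW.sum _ hyu fun k _ => (huW k).const_smul (y k) (hu k))
    _ ≤ sobNorm κ p μ u₀ + ∑ k, |y k| * sobNorm κ p μ (u k) := by
        gcongr
        refine (sobNorm_sum_le hp _ hyu fun k _ => (huW k).const_smul (y k) (hu k)).trans_eq ?_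
        exact sum_congr rfl fun k _ => sobNorm_const_smul (y k) (hu k)
    _ ≤ sobNorm κ p μ u₀ + ∑ k, sobNorm κ p μ (u k) := by
        gcongr with k
        exact mul_le_of_le_one_left (sobNorm_nonneg _) (hy k)

theorem sobNorm_pderList_quadratic_le (B : E →L[ℝ] E →L[ℝ] X) (hB : ‖B‖ ≤ 1)
    (hu₀ : ContDiff ℝ (κ : ℕ∞) u₀) (hu : ∀ k, ContDiff ℝ (κ : ℕ∞) (u k))
    (hu₀W : MemW κ ⊤ μ u₀) (huW : ∀ k, MemW κ ⊤ μ (u k)) {c : ℝ} (hc2 : 2 ≤ c)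
    (hc : sobNorm κ ⊤ μ u₀ + ∑ k, sobNorm κ ⊤ μ (u k) ≤ c) {y : Euc m} (hy : ∀ k, |y k| ≤ 1)
    (l : List (Fin m)) :
    sobNorm κ ⊤ μ (fun x => pderList l (fun y =>
        B (affineParam (u₀ x) (fun k => u k x) y) (affineParam (u₀ x) (fun k => u k x) y)) y) ≤
      c ^ 2 * (l.map fun k => sobNorm κ ⊤ μ (u k)).prod := by
  set V := fun x => affineParam (u₀ x) (fun k => u k x) y
  have hV : ContDiff ℝ (κ : ℕ∞) V := contDiff_affineParam_apply hu₀ hu y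
  have hVW : MemW κ ⊤ μ V := memW_affineParam_apply hu₀ hu hu₀W huW y
  have hVc : sobNorm κ ⊤ μ V ≤ c :=
    (sobNorm_affineParam_apply_le le_top hu₀ hu hu₀W huW hy).trans hc
  have hV0 := sobNorm_nonneg (κ := κ) (p := ⊤) (μ := μ) V
  have hγ : ∀ k, 0 ≤ sobNorm κ ⊤ μ (u k) := fun k => sobNorm_nonneg _
  have hB' : ∀ {a : ℝ}, 0 ≤ a → ‖B‖ * a ≤ a := fun ha => mul_le_of_le_one_left ha hB
  rcases l.eq_nil_or_singleton_or_pair_or_append_triple with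
    rfl | ⟨i, rfl⟩ | ⟨i, j, rfl⟩ | ⟨t, i, j, k, rfl⟩
  · calc _ ≤ ‖B‖ * (sobNorm κ ⊤ μ V * sobNorm κ ⊤ μ V) := sobNorm_bilin_le B hV hV hVW hVW
      _ ≤ c ^ 2 * 1 := by
        nlinarith [hB' (mul_nonneg hV0 hV0), mul_le_mul hVc hVc hV0 (by linarith)]
  · have hderiv := fun x => congrFun (pder_quadratic_affineParam B (u₀ x) (fun k => u k x) i) y
    simp only [pderList_cons, pderList_nil, hderiv, List.map_cons, List.map_nil, List.prod_cons,
      List.prod_nil, mul_one]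
    calc _ ≤ 2 * ‖B‖ * (sobNorm κ ⊤ μ (u i) * sobNorm κ ⊤ μ V) :=
          sobNorm_bilin_add_swap_le B (hu i) hV (huW i) hVW
      _ ≤ c ^ 2 * sobNorm κ ⊤ μ (u i) := by
        nlinarith [hB' (mul_nonneg (hγ i) hV0), mul_le_mul_of_nonneg_left hVc (hγ i),
          mul_le_mul_of_nonneg_right hc2 (mul_nonneg (hγ i) (by linarith : (0 : ℝ) ≤ c))]
  · have hderiv := fun x =>
      congrFun (pderList_pair_quadratic_affineParam B (u₀ x) (fun k => u k x) i j) y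
    simp only [hderiv, List.map_cons, List.map_nil, List.prod_cons, List.prod_nil, mul_one]
    calc _ ≤ 2 * ‖B‖ * (sobNorm κ ⊤ μ (u j) * sobNorm κ ⊤ μ (u i)) :=
          sobNorm_bilin_add_swap_le B (hu j) (hu i) (huW j) (huW i)
      _ ≤ c ^ 2 * (sobNorm κ ⊤ μ (u i) * sobNorm κ ⊤ μ (u j)) := by
        nlinarith [hB' (mul_nonneg (hγ j) (hγ i)),
          mul_le_mul_of_nonneg_right (by nlinarith : (2 : ℝ) ≤ c ^ 2) (mul_nonneg (hγ i) (hγ j))]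
  · have hderiv := fun x =>
      congrFun (pderList_quadratic_affineParam_of_three_le B (u₀ x) (fun k => u k x) t i j k) y
    simp only [hderiv, sobNorm_zero]
    exact mul_nonneg (sq_nonneg c) (List.prod_nonneg fun a ha => by
      obtain ⟨k, -, rfl⟩ := List.mem_map.1 ha
      exact hγ k)

end ParametricBounds

lemma tnorm_le_of_ae_le {m η : ℕ} {p : ℝ≥0∞} {μ : Measure (Euc n)} {P : Measure (Euc m)}
    {u : Euc m → Euc n → X} {C : ℝ} (hC : 0 ≤ C) (h : ∀ᵐ y ∂P, sobNorm η p μ (u y) ≤ C) :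
    tnorm η p μ P u ≤ C :=
  ENNReal.toReal_le_of_le_ofReal hC
    (essSup_le_of_ae_le _ (h.mono fun _ hy => ENNReal.ofReal_le_ofReal hy))

theorem tnorm_pyder_quadratic_le {m d κ : ℕ} {μ : Measure (Euc d)} {P : Measure (Euc m)}
    (hP : P (box m)ᶜ = 0) (B : E →L[ℝ] E →L[ℝ] X) (hB : ‖B‖ ≤ 1) {u₀ : Euc d → E}
    {u : Fin m → Euc d → E} (hu₀ : ContDiff ℝ (κ : ℕ∞) u₀) (hu : ∀ k, ContDiff ℝ (κ : ℕ∞) (u k))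
    (hu₀W : MemW κ ⊤ μ u₀) (huW : ∀ k, MemW κ ⊤ μ (u k)) {c : ℝ} (hc2 : 2 ≤ c)
    (hc : sobNorm κ ⊤ μ u₀ + ∑ k, sobNorm κ ⊤ μ (u k) ≤ c) (α : Fin m → ℕ) :
    tnorm κ ⊤ μ P (pyder α fun y x =>
        B (affineParam (u₀ x) (fun k => u k x) y) (affineParam (u₀ x) (fun k => u k x) y)) ≤
      c ^ 2 * ∏ k, sobNorm κ ⊤ μ (u k) ^ α k := by
  have hbox : ∀ᵐ y ∂P, y ∈ box m := ae_iff.2 hP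
  refine tnorm_le_of_ae_le (mul_nonneg (sq_nonneg c)
    (prod_nonneg fun k _ => pow_nonneg (sobNorm_nonneg _) _)) (hbox.mono fun y hy => ?_)
  rw [show ∏ k, sobNorm κ ⊤ μ (u k) ^ α k = ((dirList α).map fun k => sobNorm κ ⊤ μ (u k)).prod by
    rw [← prod_pow_multiIdx, multiIdx_dirList]]
  unfold pyder
  simp only [← pderList_dirList]
  exact sobNorm_pderList_quadratic_le B hB hu₀ hu hu₀W huW hc2 hc (fun k => abs_le.2 (hy k)) _

/-- `B[y](x) = V V^T` is modelled as the rank-one operator `w ↦ ⟪V, w⟫ V`, whose operator norm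
is the spectral norm. -/
theorem BC_parametric_bounds_general
    (d mM κ : ℕ)
    (D : Set (Euc d))
    (P : Measure (Euc mM)) (hP : P (box mM)ᶜ = 0)
    (ψ₀ : Euc d → Euc d) (ψ : Fin mM → Euc d → Euc d) (σ : Fin mM → ℝ)
    (hψ₀ : ContDiff ℝ (κ : ℕ∞) ψ₀) (hψ : ∀ k, ContDiff ℝ (κ : ℕ∞) (ψ k))
    (hψ₀W : MemW κ ⊤ (volume.restrict D) ψ₀)
    (hψW : ∀ k, MemW κ ⊤ (volume.restrict D) (fun x => σ k • ψ k x))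
    (γ₀ : ℝ) (γ : Fin mM → ℝ)
    (hγ₀ : γ₀ = sobNorm κ ⊤ (volume.restrict D) ψ₀)
    (hγ : ∀ k, γ k = sobNorm κ ⊤ (volume.restrict D) (fun x => σ k • ψ k x))
    (cγ : ℝ) (hcγ : cγ = max (γ₀ + ∑ k, γ k) 2)
    (V : Euc mM → Euc d → Euc d)
    (hV : ∀ y x, V y x = ψ₀ x + ∑ k, (σ k * y k) • ψ k x) :
    (∀ α : Fin mM → ℕ,
        tnorm κ ⊤ (volume.restrict D) P
            (pyder α (fun y x => (innerSL ℝ (V y x)).smulRight (V y x))) ≤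
          cγ ^ 2 * ∏ k, γ k ^ α k) ∧
      (∀ α : Fin mM → ℕ,
        tnorm κ ⊤ (volume.restrict D) P
            (pyder α (fun y x => (⟪V y x, V y x⟫))) ≤
          cγ ^ 2 * ∏ k, γ k ^ α k) := by
  subst hγ₀ hcγ
  obtain rfl : γ = fun k => sobNorm κ ⊤ (volume.restrict D) (fun x => σ k • ψ k x) := funext hγ
  obtain rfl : V = fun y x => affineParam (ψ₀ x) (fun k => σ k • ψ k x) y := by
    funext y x
    simp [hV, affineParam, smul_smul, mul_comm]
  have hu : ∀ k, ContDiff ℝ (κ : ℕ∞) (fun x => σ k • ψ k x) := fun k => (hψ k).const_smul (σ k)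
  have hinner : ‖innerSL ℝ (E := Euc d)‖ ≤ 1 :=
    ContinuousLinearMap.opNorm_le_bound _ zero_le_one fun v => by simp [innerSL_apply_norm]
  have hsmulRight : ‖(ContinuousLinearMap.smulRightL ℝ (Euc d) (Euc d)).comp (innerSL ℝ)‖ ≤ 1 :=
    (ContinuousLinearMap.opNorm_comp_le _ _).trans
      (mul_le_one₀ ContinuousLinearMap.norm_smulRightL_le (norm_nonneg _) hinner)
  exact ⟨tnorm_pyder_quadratic_le hP _ hsmulRight hψ₀ hu hψ₀W hψW (le_max_right _ _)
      (le_max_left _ _),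
    tnorm_pyder_quadratic_le hP _ hinner hψ₀ hu hψ₀W hψW (le_max_right _ _) (le_max_left _ _)⟩

/-- Parametric regularity of `B[y](x) = V[y](x)V[y](x)^T`
(modelled as the rank-one operator `w ↦ ⟪V,w⟫ V` on Euclidean space, whose operator
norm is the spectral norm) and `C[y](x) = V[y](x)^T V[y](x) = ⟪V,V⟫`, where
`V[y](x) = ψ₀(x) + ∑_k σ_k ψ_k(x) y_k` is the (finite-rank) Karhunen–Loève expansion:
for every multi-index `α ∈ ℕ^M`,
`⦀∂_y^α B⦀_{κ,∞,D} ≤ c_{γ_κ}² γ_κ^α` and `⦀∂_y^α C⦀_{κ,∞,D} ≤ c_{γ_κ}² γ_κ^α`. -/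
theorem BC_parametric_bounds
    (d mM κ : ℕ) (hd : 1 ≤ d) (hκ : 1 ≤ κ)
    (D : Set (Euc d)) (hDopen : IsOpen D) (hDbdd : Bornology.IsBounded D)
    (P : Measure (Euc mM)) [IsProbabilityMeasure P] (hP : P (box mM)ᶜ = 0)
    (ψ₀ : Euc d → Euc d) (ψ : Fin mM → Euc d → Euc d) (σ : Fin mM → ℝ)
    (hψ₀ : ContDiff ℝ (κ : ℕ∞) ψ₀) (hψ : ∀ k, ContDiff ℝ (κ : ℕ∞) (ψ k))
    (hψ₀W : MemW κ ⊤ (volume.restrict D) ψ₀)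
    (hψW : ∀ k, MemW κ ⊤ (volume.restrict D) (fun x => σ k • ψ k x))
    (γ₀ : ℝ) (γ : Fin mM → ℝ)
    (hγ₀ : γ₀ = sobNorm κ ⊤ (volume.restrict D) ψ₀)
    (hγ : ∀ k, γ k = sobNorm κ ⊤ (volume.restrict D) (fun x => σ k • ψ k x))
    (cγ : ℝ) (hcγ : cγ = max (γ₀ + ∑ k, γ k) 2)
    (V : Euc mM → Euc d → Euc d)
    (hV : ∀ y x, V y x = ψ₀ x + ∑ k, (σ k * y k) • ψ k x) :
    (∀ α : Fin mM → ℕ,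
        tnorm κ ⊤ (volume.restrict D) P
            (pyder α (fun y x => (innerSL ℝ (V y x)).smulRight (V y x))) ≤
          cγ ^ 2 * ∏ k, γ k ^ α k) ∧
      (∀ α : Fin mM → ℕ,
        tnorm κ ⊤ (volume.restrict D) P
            (pyder α (fun y x => (⟪V y x, V y x⟫))) ≤
          cγ ^ 2 * ∏ k, γ k ^ α k) :=
  BC_parametric_bounds_general d mM κ D P hP ψ₀ ψ σ hψ₀ hψ hψ₀W hψW γ₀ γ hγ₀ hγ cγ hcγ V hV

end
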